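/- The ring (Z/4Z)[X]/⟨X^2+1⟩ is a principal ideal ring. -/
import Mathlib

open Polynomial

noncomputable abbrev Q4 := (ZMod 4)[X] ⧸ Ideal.span {(X : (ZMod 4)[X]) ^ 2 + 1}

noncomputable def q4mk : (ZMod 4)[X] →+* Q4 := Ideal.Quotient.mk _

lemma q4_root : (q4mk X) * (q4mk X) = ((-1 : ℤ) : Q4) := by
  have : q4mk ((X : (ZMod 4)[X]) ^ 2 + 1) = 0 := by
    apply Ideal.Quotient.eq_zero_iff_mem.2
    exact Ideal.subset_span rfl
  have h2 : q4mk ((X : (ZMod 4)[X]) ^ 2) + 1 = 0 := by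
    simpa using this
  push_cast
  rw [← map_mul, ← sq]
  linear_combination h2

noncomputable def q4lift : GaussianInt →+* Q4 := Zsqrtd.lift ⟨q4mk X, q4_root⟩

lemma q4lift_surjective : Function.Surjective q4lift := by
  intro y
  obtain ⟨p, rfl⟩ := Ideal.Quotient.mk_surjective y
  show (q4mk p) ∈ Set.range q4lift
  induction p using Polynomial.induction_on with
  | C a =>
      obtain ⟨n, rfl⟩ := ZMod.intCast_surjective a
      refine ⟨(n : GaussianInt), ?_⟩
      simp [q4lift, q4mk, map_intCast]
  | add p q hp hq =>
      obtain ⟨zp, hzp⟩ := hp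
      obtain ⟨zq, hzq⟩ := hq
      exact ⟨zp + zq, by rw [map_add, map_add, hzp, hzq]⟩
  | monomial n a hp =>
      obtain ⟨z, hz⟩ := hp
      refine ⟨z * Zsqrtd.sqrtd, ?_⟩
      have hx : q4lift Zsqrtd.sqrtd = q4mk X := by
        simp [q4lift, Zsqrtd.lift]
      rw [map_mul, hz, hx, ← map_mul]
      congr 1
      ring

/-- `(ℤ/4ℤ)[X]/⟨X²+1⟩` is a principal ideal ring. -/
theorem zmod4_negacyclic_pir :
    IsPrincipalIdealRing ((ZMod 4)[X] ⧸ Ideal.span {(X : (ZMod 4)[X]) ^ 2 + 1}) :=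
  IsPrincipalIdealRing.of_surjective q4lift q4lift_surjective
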